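/- The second-order nonlinear participation factor with a linear mode, p_{2,ki} = φ_{ki} μ_i where μ_i = αψ_{ik} − α² ∑_{p≤q} h^i_{pq} ψ_{pk}ψ_{qk}, is invariant under any change of eigenvector scalings (σ_i, ξ_i) → (σ'_i, ξ'_i) that preserves all products θ_i = ξ_iσ_i(ψ̂_iφ̂_i), i = 1,…,n. In particular, setting σ'_i = θ_i/(ψ̂_iφ̂_i), ξ'_i = 1 gives the same p_{2,ki} as σ'_i = 1, ξ'_i = θ_i/(ψ̂_iφ̂_i). -/
import Mathlib


open Matrix

/-- the 2nd-order normal form coefficient computed from given eigenvectors -/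
noncomputable def h2 (n : ℕ) (lam : Fin n → ℂ) (a : Fin n → Fin n → Fin n → ℂ)
    (ψ φ : Fin n → Fin n → ℂ) (i p q : Fin n) : ℂ :=
  (∑ j : Fin n, ∑ α : Fin n, ∑ β : Fin n, ψ i j * a j α β * φ p α * φ q β) /
    (lam p + lam q - lam i)

/-- the 2nd-order normal form initial value μ_i for a perturbation α on state k -/
noncomputable def mu2 (n : ℕ) (lam : Fin n → ℂ) (a : Fin n → Fin n → Fin n → ℂ)
    (ψ φ : Fin n → Fin n → ℂ) (α : ℂ) (k i : Fin n) : ℂ :=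
  α * ψ i k - α ^ 2 * ∑ p : Fin n, ∑ q : Fin n,
    (if p ≤ q then h2 n lam a ψ φ i p q * ψ p k * ψ q k else 0)

lemma h2_scale (n : ℕ) (lam : Fin n → ℂ) (a : Fin n → Fin n → Fin n → ℂ)
    (φhat ψhat : Fin n → Fin n → ℂ) (σ ξ : Fin n → ℂ) (i p q : Fin n) :
    h2 n lam a (fun j => ξ j • ψhat j) (fun j => σ j • φhat j) i p q
      = ξ i * σ p * σ q * h2 n lam a ψhat φhat i p q := by
  unfold h2
  rw [← mul_div_assoc]
  congr 1
  simp only [Pi.smul_apply, smul_eq_mul, Finset.mul_sum]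
  refine Finset.sum_congr rfl fun j _ => Finset.sum_congr rfl fun A _ =>
    Finset.sum_congr rfl fun B _ => by ring

lemma key (n : ℕ) (lam : Fin n → ℂ) (a : Fin n → Fin n → Fin n → ℂ)
    (φhat ψhat : Fin n → Fin n → ℂ) (σ ξ : Fin n → ℂ) (α : ℂ) (k i : Fin n) :
    (σ i * φhat i k) *
      mu2 n lam a (fun j => ξ j • ψhat j) (fun j => σ j • φhat j) α k i
    = φhat i k * (α * (ξ i * σ i) * ψhat i k
        - α ^ 2 * ∑ p : Fin n, ∑ q : Fin n,
          (if p ≤ q then (ξ i * σ i) * (ξ p * σ p) * (ξ q * σ q) *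
            h2 n lam a ψhat φhat i p q * ψhat p k * ψhat q k else 0)) := by
  unfold mu2
  simp only [h2_scale, Pi.smul_apply, smul_eq_mul, mul_sub]
  congr 1
  · ring
  · simp only [Finset.mul_sum]
    refine Finset.sum_congr rfl fun p _ => Finset.sum_congr rfl fun q _ => ?_
    split_ifs <;> ring

/-- the 2nd-order nonlinear participation factor p_{2,ki} = φ_{ki} μ_i is
invariant under any change of scalings (σ, ξ) → (σ', ξ') preserving every product
θ_i = ξ_i σ_i (ψ̂_i φ̂_i). -/
theorem nonlinear_pf_invariant (n : ℕ) (lam : Fin n → ℂ)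
    (a : Fin n → Fin n → Fin n → ℂ)
    (hnr : ∀ p q i : Fin n, lam p + lam q ≠ lam i)
    (φhat ψhat : Fin n → Fin n → ℂ)
    (hd : ∀ i, dotProduct (ψhat i) (φhat i) ≠ 0)
    (σ ξ σ' ξ' : Fin n → ℂ)
    (hσ : ∀ i, σ i ≠ 0) (hξ : ∀ i, ξ i ≠ 0)
    (hσ' : ∀ i, σ' i ≠ 0) (hξ' : ∀ i, ξ' i ≠ 0)
    (hθ : ∀ i, ξ i * σ i * dotProduct (ψhat i) (φhat i)
             = ξ' i * σ' i * dotProduct (ψhat i) (φhat i))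
    (α : ℂ) (k i : Fin n) :
    (σ i * φhat i k) *
      mu2 n lam a (fun j => ξ j • ψhat j) (fun j => σ j • φhat j) α k i
    = (σ' i * φhat i k) *
      mu2 n lam a (fun j => ξ' j • ψhat j) (fun j => σ' j • φhat j) α k i := by
  have hc : ∀ j, ξ j * σ j = ξ' j * σ' j := fun j =>
    mul_right_cancel₀ (hd j) (hθ j)
  rw [key, key]
  simp only [hc]
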